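/- Let f : U → ℝ³ be a smooth immersion parametrized by asymptotic Chebyshev coordinates: ‖f_u‖ = ‖f_v‖ = 1 and f_uu·N = f_vv·N = 0 at every point, where N is the unit normal. Suppose the Gaussian curvature satisfies K ≡ −1 on U, and let ψ : U → (0, π) be the smooth angle function with cos ψ = f_u·f_v (the angle between the two asymptotic directions). Then ψ satisfies the sine-Gordon equation ψ_uv = sin ψ on U. (This is the classical equivalence (2.10): the structure equations of surfaces of constant Gaussian curvature K = −1 reduce to the sine-Gordon equation in asymptotic coordinates.) -/

import Mathlib

noncomputable section

open Real

/-- Vectors in `ℝ³`. -/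
abbrev V3 : Type := Fin 3 → ℝ

/-- Euclidean dot product on `ℝ³`. -/
def dot3 (u v : V3) : ℝ := u 0 * v 0 + u 1 * v 1 + u 2 * v 2

/-- Euclidean norm on `ℝ³`. -/
def norm3 (u : V3) : ℝ := Real.sqrt (dot3 u u)

/-- Cross product on `ℝ³`. -/
def cross3 (u v : V3) : V3 :=
  ![u 1 * v 2 - u 2 * v 1, u 2 * v 0 - u 0 * v 2, u 0 * v 1 - u 1 * v 0]

/-- Partial derivative in the first (`u`) coordinate direction. -/
def Du (f : ℝ × ℝ → V3) (p : ℝ × ℝ) : V3 := fderiv ℝ f p (1, 0)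

/-- Partial derivative in the second (`v`) coordinate direction. -/
def Dv (f : ℝ × ℝ → V3) (p : ℝ × ℝ) : V3 := fderiv ℝ f p (0, 1)

/-- First fundamental form coefficient `E = f_u · f_u`. -/
def Ecoef (f : ℝ × ℝ → V3) (p : ℝ × ℝ) : ℝ := dot3 (Du f p) (Du f p)

/-- First fundamental form coefficient `F = f_u · f_v`. -/
def Fcoef (f : ℝ × ℝ → V3) (p : ℝ × ℝ) : ℝ := dot3 (Du f p) (Dv f p)

/-- First fundamental form coefficient `G = f_v · f_v`. -/
def Gcoef (f : ℝ × ℝ → V3) (p : ℝ × ℝ) : ℝ := dot3 (Dv f p) (Dv f p)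

/-- Unit normal `N = (f_u × f_v)/‖f_u × f_v‖`. -/
def normalVec (f : ℝ × ℝ → V3) (p : ℝ × ℝ) : V3 :=
  (norm3 (cross3 (Du f p) (Dv f p)))⁻¹ • cross3 (Du f p) (Dv f p)

/-- Second fundamental form coefficient `l = f_uu · N`. -/
def lcoef (f : ℝ × ℝ → V3) (p : ℝ × ℝ) : ℝ := dot3 (Du (Du f) p) (normalVec f p)

/-- Second fundamental form coefficient `m = f_uv · N`. -/
def mcoef (f : ℝ × ℝ → V3) (p : ℝ × ℝ) : ℝ := dot3 (Dv (Du f) p) (normalVec f p)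

/-- Second fundamental form coefficient `n = f_vv · N`. -/
def ncoef (f : ℝ × ℝ → V3) (p : ℝ × ℝ) : ℝ := dot3 (Dv (Dv f) p) (normalVec f p)

/-- Gaussian curvature `K = (l n − m²)/(E G − F²)`. -/
def GaussK (f : ℝ × ℝ → V3) (p : ℝ × ℝ) : ℝ :=
  (lcoef f p * ncoef f p - (mcoef f p) ^ 2) /
    (Ecoef f p * Gcoef f p - (Fcoef f p) ^ 2)

/-- Mean curvature `H = (E n − 2 F m + G l)/(2(E G − F²))`. -/
def MeanH (f : ℝ × ℝ → V3) (p : ℝ × ℝ) : ℝ :=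
  (Ecoef f p * ncoef f p - 2 * Fcoef f p * mcoef f p + Gcoef f p * lcoef f p) /
    (2 * (Ecoef f p * Gcoef f p - (Fcoef f p) ^ 2))

/-- `f` is an immersion on `U`: the partial derivatives are linearly independent,
equivalently their cross product is nonzero. -/
def Immersed (f : ℝ × ℝ → V3) (U : Set (ℝ × ℝ)) : Prop :=
  ∀ p ∈ U, cross3 (Du f p) (Dv f p) ≠ 0


/-- Partial derivative of a scalar function in the first (`u`) coordinate direction. -/
def du1 (g : ℝ × ℝ → ℝ) (p : ℝ × ℝ) : ℝ := fderiv ℝ g p (1, 0)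

/-- Partial derivative of a scalar function in the second (`v`) coordinate direction. -/
def dv1 (g : ℝ × ℝ → ℝ) (p : ℝ × ℝ) : ℝ := fderiv ℝ g p (0, 1)

/-! ### Auxiliary lemmas -/

lemma dot3_comm (a b : V3) : dot3 a b = dot3 b a := by
  simp [dot3]; ring

lemma dot3_smul_right (a : V3) (r : ℝ) (b : V3) : dot3 a (r • b) = r * dot3 a b := by
  simp [dot3, Pi.smul_apply, smul_eq_mul]; ring

lemma lagrange3 (u v : V3) :
    dot3 (cross3 u v) (cross3 u v) = dot3 u u * dot3 v v - (dot3 u v) ^ 2 := by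
  simp [dot3, cross3]; ring

lemma decomp3 (w1 w2 u v : V3) :
    dot3 (cross3 u v) (cross3 u v) * dot3 w1 w2 =
      (dot3 v v * dot3 w1 u - dot3 u v * dot3 w1 v) * dot3 w2 u
      + (dot3 u u * dot3 w1 v - dot3 u v * dot3 w1 u) * dot3 w2 v
      + dot3 w1 (cross3 u v) * dot3 w2 (cross3 u v) := by
  simp [dot3, cross3]; ring

lemma dot3_normalVec (f : ℝ × ℝ → V3) (p : ℝ × ℝ) (w : V3) :
    dot3 w (normalVec f p) =
      (norm3 (cross3 (Du f p) (Dv f p)))⁻¹ * dot3 w (cross3 (Du f p) (Dv f p)) := by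
  unfold normalVec; rw [dot3_smul_right]

lemma diffAt {F : Type*} [NormedAddCommGroup F] [NormedSpace ℝ F]
    {g : ℝ × ℝ → F} {U : Set (ℝ × ℝ)} (hU : IsOpen U)
    (hg : ContDiffOn ℝ (⊤ : ℕ∞) g U) {p : ℝ × ℝ} (hp : p ∈ U) : DifferentiableAt ℝ g p :=
  (hg.differentiableOn (by simp)).differentiableAt (hU.mem_nhds hp)

lemma contDiffOn_dirDeriv {F : Type*} [NormedAddCommGroup F] [NormedSpace ℝ F]
    {g : ℝ × ℝ → F} {U : Set (ℝ × ℝ)} (hU : IsOpen U)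
    (hg : ContDiffOn ℝ (⊤ : ℕ∞) g U) (w : ℝ × ℝ) :
    ContDiffOn ℝ (⊤ : ℕ∞) (fun p => fderiv ℝ g p w) U := by
  have h1 : ContDiffOn ℝ (⊤ : ℕ∞) (fderiv ℝ g) U := hg.fderiv_of_isOpen hU (by simp)
  exact (ContinuousLinearMap.apply ℝ F w).contDiff.comp_contDiffOn h1

lemma contDiffOn_Du {g : ℝ × ℝ → V3} {U : Set (ℝ × ℝ)} (hU : IsOpen U)
    (hg : ContDiffOn ℝ (⊤ : ℕ∞) g U) : ContDiffOn ℝ (⊤ : ℕ∞) (Du g) U := contDiffOn_dirDeriv hU hg _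

lemma contDiffOn_Dv {g : ℝ × ℝ → V3} {U : Set (ℝ × ℝ)} (hU : IsOpen U)
    (hg : ContDiffOn ℝ (⊤ : ℕ∞) g U) : ContDiffOn ℝ (⊤ : ℕ∞) (Dv g) U := contDiffOn_dirDeriv hU hg _

lemma fderiv_comp_proj {A : ℝ × ℝ → V3} {p : ℝ × ℝ} (hA : DifferentiableAt ℝ A p)
    (i : Fin 3) (w : ℝ × ℝ) :
    fderiv ℝ (fun q => A q i) p w = fderiv ℝ A p w i := by
  have h := ((ContinuousLinearMap.proj i : V3 →L[ℝ] ℝ).hasFDerivAt (x := A p)).comp p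
    hA.hasFDerivAt
  have h2 : HasFDerivAt (fun q => A q i)
      ((ContinuousLinearMap.proj i : V3 →L[ℝ] ℝ).comp (fderiv ℝ A p)) p := h
  rw [h2.fderiv]; rfl

lemma diffAt_proj {A : ℝ × ℝ → V3} {p : ℝ × ℝ} (hA : DifferentiableAt ℝ A p) (i : Fin 3) :
    DifferentiableAt ℝ (fun q => A q i) p :=
  (ContinuousLinearMap.proj i : V3 →L[ℝ] ℝ).differentiableAt.comp p hA

lemma fderiv_mul_apply {a b : ℝ × ℝ → ℝ} {p : ℝ × ℝ} (ha : DifferentiableAt ℝ a p)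
    (hb : DifferentiableAt ℝ b p) (w : ℝ × ℝ) :
    fderiv ℝ (fun q => a q * b q) p w = fderiv ℝ a p w * b p + a p * fderiv ℝ b p w := by
  rw [fderiv_fun_mul ha hb]; simp; ring

lemma fderiv_dot3_apply {A B : ℝ × ℝ → V3} {p : ℝ × ℝ} (hA : DifferentiableAt ℝ A p)
    (hB : DifferentiableAt ℝ B p) (w : ℝ × ℝ) :
    fderiv ℝ (fun q => dot3 (A q) (B q)) p w =
      dot3 (fderiv ℝ A p w) (B p) + dot3 (A p) (fderiv ℝ B p w) := by
  have h : (fun q => dot3 (A q) (B q)) =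
      fun q => A q 0 * B q 0 + A q 1 * B q 1 + A q 2 * B q 2 := rfl
  rw [h]
  have d0 : DifferentiableAt ℝ (fun q => A q 0 * B q 0) p :=
    (diffAt_proj hA 0).mul (diffAt_proj hB 0)
  have d1 : DifferentiableAt ℝ (fun q => A q 1 * B q 1) p :=
    (diffAt_proj hA 1).mul (diffAt_proj hB 1)
  have d2 : DifferentiableAt ℝ (fun q => A q 2 * B q 2) p :=
    (diffAt_proj hA 2).mul (diffAt_proj hB 2)
  rw [fderiv_fun_add (show DifferentiableAt ℝ (fun q => A q 0 * B q 0 + A q 1 * B q 1) p from d0.add d1) d2, fderiv_fun_add d0 d1]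
  simp only [ContinuousLinearMap.add_apply]
  rw [fderiv_mul_apply (diffAt_proj hA 0) (diffAt_proj hB 0) w,
    fderiv_mul_apply (diffAt_proj hA 1) (diffAt_proj hB 1) w,
    fderiv_mul_apply (diffAt_proj hA 2) (diffAt_proj hB 2) w,
    fderiv_comp_proj hA 0 w, fderiv_comp_proj hA 1 w, fderiv_comp_proj hA 2 w,
    fderiv_comp_proj hB 0 w, fderiv_comp_proj hB 1 w, fderiv_comp_proj hB 2 w]
  simp [dot3]; ring

lemma fderiv_dirDeriv {F : Type*} [NormedAddCommGroup F] [NormedSpace ℝ F]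
    {g : ℝ × ℝ → F} {U : Set (ℝ × ℝ)} (hU : IsOpen U)
    (hg : ContDiffOn ℝ (⊤ : ℕ∞) g U) {p : ℝ × ℝ} (hp : p ∈ U) (w w' : ℝ × ℝ) :
    fderiv ℝ (fun q => fderiv ℝ g q w) p w' = fderiv ℝ (fderiv ℝ g) p w' w := by
  have h1 : ContDiffOn ℝ (⊤ : ℕ∞) (fderiv ℝ g) U := hg.fderiv_of_isOpen hU (by simp)
  have hd : DifferentiableAt ℝ (fderiv ℝ g) p :=
    (h1.differentiableOn (by simp)).differentiableAt (hU.mem_nhds hp)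
  have h := ((ContinuousLinearMap.apply ℝ F w).hasFDerivAt (x := fderiv ℝ g p)).comp p
    hd.hasFDerivAt
  have h2 : HasFDerivAt (fun q => fderiv ℝ g q w)
      ((ContinuousLinearMap.apply ℝ F w).comp (fderiv ℝ (fderiv ℝ g) p)) p := h
  rw [h2.fderiv]; rfl

lemma schwarz_dir {F : Type*} [NormedAddCommGroup F] [NormedSpace ℝ F]
    {g : ℝ × ℝ → F} {U : Set (ℝ × ℝ)} (hU : IsOpen U)
    (hg : ContDiffOn ℝ (⊤ : ℕ∞) g U) {p : ℝ × ℝ} (hp : p ∈ U) (w w' : ℝ × ℝ) :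
    fderiv ℝ (fderiv ℝ g) p w w' = fderiv ℝ (fderiv ℝ g) p w' w := by
  have h1 : ContDiffOn ℝ (⊤ : ℕ∞) (fderiv ℝ g) U := hg.fderiv_of_isOpen hU (by simp)
  have hd : DifferentiableAt ℝ (fderiv ℝ g) p :=
    (h1.differentiableOn (by simp)).differentiableAt (hU.mem_nhds hp)
  have hev : ∀ᶠ y in nhds p, HasFDerivAt g (fderiv ℝ g y) y := by
    filter_upwards [hU.mem_nhds hp] with y hy using
      ((hg.differentiableOn (by simp)).differentiableAt (hU.mem_nhds hy)).hasFDerivAt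
  exact second_derivative_symmetric_of_eventually hev hd.hasFDerivAt w w'

lemma schwarz3 {g : ℝ × ℝ → V3} {U : Set (ℝ × ℝ)} (hU : IsOpen U)
    (hg : ContDiffOn ℝ (⊤ : ℕ∞) g U) {p : ℝ × ℝ} (hp : p ∈ U) :
    Dv (Du g) p = Du (Dv g) p := by
  show fderiv ℝ (fun q => fderiv ℝ g q (1,0)) p (0,1)
     = fderiv ℝ (fun q => fderiv ℝ g q (0,1)) p (1,0)
  rw [fderiv_dirDeriv hU hg hp, fderiv_dirDeriv hU hg hp, schwarz_dir hU hg hp]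

lemma fderiv_cos_comp {ψ : ℝ × ℝ → ℝ} {p : ℝ × ℝ} (h : DifferentiableAt ℝ ψ p) (w : ℝ × ℝ) :
    fderiv ℝ (fun q => Real.cos (ψ q)) p w = -Real.sin (ψ p) * fderiv ℝ ψ p w := by
  have hc := (Real.hasDerivAt_cos (ψ p)).comp_hasFDerivAt p h.hasFDerivAt
  have h2 : HasFDerivAt (fun q => Real.cos (ψ q)) ((-Real.sin (ψ p)) • fderiv ℝ ψ p) p := hc
  rw [h2.fderiv]; simp

lemma fderiv_neg_sin_comp {ψ : ℝ × ℝ → ℝ} {p : ℝ × ℝ} (h : DifferentiableAt ℝ ψ p) (w : ℝ × ℝ) :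
    fderiv ℝ (fun q => -Real.sin (ψ q)) p w = -(Real.cos (ψ p) * fderiv ℝ ψ p w) := by
  have hc := (Real.hasDerivAt_sin (ψ p)).comp_hasFDerivAt p h.hasFDerivAt
  have h2 : HasFDerivAt (fun q => Real.sin (ψ q)) ((Real.cos (ψ p)) • fderiv ℝ ψ p) p := hc
  have h3 : HasFDerivAt (fun q => -Real.sin (ψ q)) (-((Real.cos (ψ p)) • fderiv ℝ ψ p)) p := h2.neg
  rw [h3.fderiv]; simp

lemma diffAt_neg_sin_comp {ψ : ℝ × ℝ → ℝ} {p : ℝ × ℝ} (h : DifferentiableAt ℝ ψ p) :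
    DifferentiableAt ℝ (fun q => -Real.sin (ψ q)) p := by
  have hc := (Real.hasDerivAt_sin (ψ p)).comp_hasFDerivAt p h.hasFDerivAt
  have h2 : HasFDerivAt (fun q => Real.sin (ψ q)) ((Real.cos (ψ p)) • fderiv ℝ ψ p) p := hc
  exact h2.differentiableAt.neg

lemma fderiv_congr_on {F : Type*} [NormedAddCommGroup F] [NormedSpace ℝ F]
    {g h : ℝ × ℝ → F} {U : Set (ℝ × ℝ)} (hU : IsOpen U) (hgh : ∀ q ∈ U, g q = h q)
    {p : ℝ × ℝ} (hp : p ∈ U) : fderiv ℝ g p = fderiv ℝ h p :=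
  Filter.EventuallyEq.fderiv_eq
    (by filter_upwards [hU.mem_nhds hp] with q hq using hgh q hq)


set_option maxHeartbeats 2000000 in
/-- The classical equivalence (2.10): for a surface of constant Gaussian curvature `K = −1`
parametrized by asymptotic Chebyshev coordinates, the angle `ψ ∈ (0, π)` between the
asymptotic directions satisfies the sine-Gordon equation `ψ_uv = sin ψ`. -/
theorem constant_negative_curvature_sineGordon
    (U : Set (ℝ × ℝ)) (hU : IsOpen U)
    (f : ℝ × ℝ → V3) (hf : ContDiffOn ℝ (⊤ : ℕ∞) f U) (hfi : Immersed f U)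
    (hcheb : ∀ p ∈ U, Ecoef f p = 1 ∧ Gcoef f p = 1)
    (hasym : ∀ p ∈ U, lcoef f p = 0 ∧ ncoef f p = 0)
    (hK : ∀ p ∈ U, GaussK f p = -1)
    (ψ : ℝ × ℝ → ℝ) (hψ : ContDiffOn ℝ (⊤ : ℕ∞) ψ U)
    (hψrange : ∀ p ∈ U, ψ p ∈ Set.Ioo 0 Real.pi)
    (hψangle : ∀ p ∈ U, Real.cos (ψ p) = Fcoef f p) :
    ∀ p ∈ U, dv1 (du1 ψ) p = Real.sin (ψ p) := by
  intro p hp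
  -- smoothness of the various derivatives
  have hfu : ContDiffOn ℝ (⊤ : ℕ∞) (Du f) U := contDiffOn_Du hU hf
  have hfv : ContDiffOn ℝ (⊤ : ℕ∞) (Dv f) U := contDiffOn_Dv hU hf
  have hfuu : ContDiffOn ℝ (⊤ : ℕ∞) (Du (Du f)) U := contDiffOn_Du hU hfu
  have hfuv : ContDiffOn ℝ (⊤ : ℕ∞) (Dv (Du f)) U := contDiffOn_Dv hU hfu
  have hfvv : ContDiffOn ℝ (⊤ : ℕ∞) (Dv (Dv f)) U := contDiffOn_Dv hU hfv
  -- Schwarz symmetry for f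
  have hsch : ∀ q ∈ U, Du (Dv f) q = Dv (Du f) q := fun q hq => (schwarz3 hU hf hq).symm
  -- derivatives of E = 1 vanish
  have hEuu : ∀ q ∈ U, dot3 (Du (Du f) q) (Du f q) = 0 := by
    intro q hq
    have h0 : fderiv ℝ (Ecoef f) q = fderiv ℝ (fun _ : ℝ × ℝ => (1:ℝ)) q :=
      fderiv_congr_on hU (fun r hr => (hcheb r hr).1) hq
    have h1 : fderiv ℝ (fun r => dot3 (Du f r) (Du f r)) q ((1:ℝ),(0:ℝ)) = 0 := by
      have he : (fun r => dot3 (Du f r) (Du f r)) = Ecoef f := rfl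
      rw [he, h0]; simp
    rw [fderiv_dot3_apply (diffAt hU hfu hq) (diffAt hU hfu hq)] at h1
    have h2 : dot3 (Du (Du f) q) (Du f q) + dot3 (Du f q) (Du (Du f) q) = 0 := h1
    rw [dot3_comm (Du f q) (Du (Du f) q)] at h2
    linarith
  have hEuv : ∀ q ∈ U, dot3 (Dv (Du f) q) (Du f q) = 0 := by
    intro q hq
    have h0 : fderiv ℝ (Ecoef f) q = fderiv ℝ (fun _ : ℝ × ℝ => (1:ℝ)) q :=
      fderiv_congr_on hU (fun r hr => (hcheb r hr).1) hq
    have h1 : fderiv ℝ (fun r => dot3 (Du f r) (Du f r)) q ((0:ℝ),(1:ℝ)) = 0 := by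
      have he : (fun r => dot3 (Du f r) (Du f r)) = Ecoef f := rfl
      rw [he, h0]; simp
    rw [fderiv_dot3_apply (diffAt hU hfu hq) (diffAt hU hfu hq)] at h1
    have h2 : dot3 (Dv (Du f) q) (Du f q) + dot3 (Du f q) (Dv (Du f) q) = 0 := h1
    rw [dot3_comm (Du f q) (Dv (Du f) q)] at h2
    linarith
  -- derivatives of G = 1 vanish
  have hGvu : ∀ q ∈ U, dot3 (Dv (Du f) q) (Dv f q) = 0 := by
    intro q hq
    have h0 : fderiv ℝ (Gcoef f) q = fderiv ℝ (fun _ : ℝ × ℝ => (1:ℝ)) q :=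
      fderiv_congr_on hU (fun r hr => (hcheb r hr).2) hq
    have h1 : fderiv ℝ (fun r => dot3 (Dv f r) (Dv f r)) q ((1:ℝ),(0:ℝ)) = 0 := by
      have he : (fun r => dot3 (Dv f r) (Dv f r)) = Gcoef f := rfl
      rw [he, h0]; simp
    rw [fderiv_dot3_apply (diffAt hU hfv hq) (diffAt hU hfv hq)] at h1
    have h2 : dot3 (Du (Dv f) q) (Dv f q) + dot3 (Dv f q) (Du (Dv f) q) = 0 := h1
    rw [hsch q hq, dot3_comm (Dv f q) (Dv (Du f) q)] at h2
    linarith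
  have hGvv : ∀ q ∈ U, dot3 (Dv (Dv f) q) (Dv f q) = 0 := by
    intro q hq
    have h0 : fderiv ℝ (Gcoef f) q = fderiv ℝ (fun _ : ℝ × ℝ => (1:ℝ)) q :=
      fderiv_congr_on hU (fun r hr => (hcheb r hr).2) hq
    have h1 : fderiv ℝ (fun r => dot3 (Dv f r) (Dv f r)) q ((0:ℝ),(1:ℝ)) = 0 := by
      have he : (fun r => dot3 (Dv f r) (Dv f r)) = Gcoef f := rfl
      rw [he, h0]; simp
    rw [fderiv_dot3_apply (diffAt hU hfv hq) (diffAt hU hfv hq)] at h1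
    have h2 : dot3 (Dv (Dv f) q) (Dv f q) + dot3 (Dv f q) (Dv (Dv f) q) = 0 := h1
    rw [dot3_comm (Dv f q) (Dv (Dv f) q)] at h2
    linarith
  -- first derivatives of F
  have hFu : ∀ q ∈ U, fderiv ℝ (Fcoef f) q ((1:ℝ),(0:ℝ)) = dot3 (Du (Du f) q) (Dv f q) := by
    intro q hq
    have h1 := fderiv_dot3_apply (diffAt hU hfu hq) (diffAt hU hfv hq) ((1:ℝ),(0:ℝ))
    have he : (fun r => dot3 (Du f r) (Dv f r)) = Fcoef f := rfl
    rw [he] at h1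
    have h2 : fderiv ℝ (Fcoef f) q ((1:ℝ),(0:ℝ))
        = dot3 (Du (Du f) q) (Dv f q) + dot3 (Du f q) (Du (Dv f) q) := h1
    rw [h2, hsch q hq, dot3_comm (Du f q) (Dv (Du f) q), hEuv q hq, add_zero]
  have hFv : ∀ q ∈ U, fderiv ℝ (Fcoef f) q ((0:ℝ),(1:ℝ)) = dot3 (Du f q) (Dv (Dv f) q) := by
    intro q hq
    have h1 := fderiv_dot3_apply (diffAt hU hfu hq) (diffAt hU hfv hq) ((0:ℝ),(1:ℝ))
    have he : (fun r => dot3 (Du f r) (Dv f r)) = Fcoef f := rfl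
    rw [he] at h1
    have h2 : fderiv ℝ (Fcoef f) q ((0:ℝ),(1:ℝ))
        = dot3 (Dv (Du f) q) (Dv f q) + dot3 (Du f q) (Dv (Dv f) q) := h1
    rw [h2, hGvu q hq, zero_add]
  -- differentiability of ψ and its partials
  have hψd : ∀ q ∈ U, DifferentiableAt ℝ ψ q := fun q hq => diffAt hU hψ hq
  -- F in terms of ψ : first derivatives
  have hFψ : ∀ q ∈ U, fderiv ℝ (Fcoef f) q = fderiv ℝ (fun r => Real.cos (ψ r)) q :=
    fun q hq => fderiv_congr_on hU (fun r hr => (hψangle r hr).symm) hq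
  have hFup : dot3 (Du (Du f) p) (Dv f p) = -Real.sin (ψ p) * fderiv ℝ ψ p ((1:ℝ),(0:ℝ)) := by
    rw [← hFu p hp, hFψ p hp, fderiv_cos_comp (hψd p hp)]
  have hFvp : dot3 (Du f p) (Dv (Dv f) p) = -Real.sin (ψ p) * fderiv ℝ ψ p ((0:ℝ),(1:ℝ)) := by
    rw [← hFv p hp, hFψ p hp, fderiv_cos_comp (hψd p hp)]
  -- the mixed second derivative of F, geometric side
  have hsecond : dv1 (du1 (Fcoef f)) p
      = dot3 (Dv (Du (Du f)) p) (Dv f p) + dot3 (Du (Du f) p) (Dv (Dv f) p) := by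
    have he : ∀ q ∈ U, du1 (Fcoef f) q = dot3 (Du (Du f) q) (Dv f q) := fun q hq => hFu q hq
    have h0 : fderiv ℝ (du1 (Fcoef f)) p
        = fderiv ℝ (fun q => dot3 (Du (Du f) q) (Dv f q)) p := fderiv_congr_on hU he hp
    show fderiv ℝ (du1 (Fcoef f)) p ((0:ℝ),(1:ℝ)) = _
    rw [h0, fderiv_dot3_apply (diffAt hU hfuu hp) (diffAt hU hfv hp)]
    rfl
  -- first term : -(|f_uv|²)
  have ht1 : dot3 (Dv (Du (Du f)) p) (Dv f p)
      = -dot3 (Dv (Du f) p) (Dv (Du f) p) := by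
    have hswap : Dv (Du (Du f)) p = Du (Dv (Du f)) p := schwarz3 hU hfu hp
    have h0 : fderiv ℝ (fun q => dot3 (Dv (Du f) q) (Dv f q)) p
        = fderiv ℝ (fun _ : ℝ × ℝ => (0:ℝ)) p := fderiv_congr_on hU hGvu hp
    have h1 : fderiv ℝ (fun q => dot3 (Dv (Du f) q) (Dv f q)) p ((1:ℝ),(0:ℝ)) = 0 := by
      rw [h0]; simp
    rw [fderiv_dot3_apply (diffAt hU hfuv hp) (diffAt hU hfv hp)] at h1
    have h2 : dot3 (Du (Dv (Du f)) p) (Dv f p) + dot3 (Dv (Du f) p) (Du (Dv f) p) = 0 := h1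
    rw [hsch p hp] at h2
    rw [hswap]; linarith
  -- notation for the pointwise algebra
  have hE1 : dot3 (Du f p) (Du f p) = 1 := (hcheb p hp).1
  have hG1 : dot3 (Dv f p) (Dv f p) = 1 := (hcheb p hp).2
  have hFco : dot3 (Du f p) (Dv f p) = Real.cos (ψ p) := (hψangle p hp).symm
  have hs : 0 < Real.sin (ψ p) :=
    Real.sin_pos_of_pos_of_lt_pi (hψrange p hp).1 (hψrange p hp).2
  have hsne : Real.sin (ψ p) ≠ 0 := hs.ne'
  have hs2ne : Real.sin (ψ p) ^ 2 ≠ 0 := pow_ne_zero 2 hsne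
  have hpyth : Real.sin (ψ p) ^ 2 + Real.cos (ψ p) ^ 2 = 1 := Real.sin_sq_add_cos_sq (ψ p)
  have hcc : dot3 (cross3 (Du f p) (Dv f p)) (cross3 (Du f p) (Dv f p))
      = Real.sin (ψ p) ^ 2 := by
    rw [lagrange3, hE1, hG1, hFco]; nlinarith
  have hnorm : norm3 (cross3 (Du f p) (Dv f p)) = Real.sin (ψ p) := by
    show Real.sqrt (dot3 (cross3 (Du f p) (Dv f p)) (cross3 (Du f p) (Dv f p)))
      = Real.sin (ψ p)
    rw [hcc]
    exact Real.sqrt_sq hs.le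
  -- l = 0, n = 0 give orthogonality to the cross product
  have hl : dot3 (Du (Du f) p) (cross3 (Du f p) (Dv f p)) = 0 := by
    have h := (hasym p hp).1
    have h2 : dot3 (Du (Du f) p) (normalVec f p) = 0 := h
    rw [dot3_normalVec, hnorm] at h2
    have hsne : (Real.sin (ψ p))⁻¹ ≠ 0 := inv_ne_zero hs.ne'
    exact (mul_eq_zero.1 h2).resolve_left hsne
  have hn : dot3 (Dv (Dv f) p) (cross3 (Du f p) (Dv f p)) = 0 := by
    have h := (hasym p hp).2
    have h2 : dot3 (Dv (Dv f) p) (normalVec f p) = 0 := h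
    rw [dot3_normalVec, hnorm] at h2
    have hsne : (Real.sin (ψ p))⁻¹ ≠ 0 := inv_ne_zero hs.ne'
    exact (mul_eq_zero.1 h2).resolve_left hsne
  -- K = -1 gives m² = sin²ψ
  have hm2 : mcoef f p ^ 2 = Real.sin (ψ p) ^ 2 := by
    have h := hK p hp
    have h2 : (lcoef f p * ncoef f p - mcoef f p ^ 2)
        / (Ecoef f p * Gcoef f p - Fcoef f p ^ 2) = -1 := h
    have hEp : Ecoef f p = 1 := (hcheb p hp).1
    have hGp : Gcoef f p = 1 := (hcheb p hp).2
    have hFp : Fcoef f p = Real.cos (ψ p) := (hψangle p hp).symm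
    rw [(hasym p hp).1, (hasym p hp).2, hEp, hGp, hFp] at h2
    have hden : 1 * 1 - Real.cos (ψ p) ^ 2 = Real.sin (ψ p) ^ 2 := by nlinarith
    rw [hden] at h2
    have := (div_eq_iff hs2ne).1 h2
    nlinarith
  have hwc : dot3 (Dv (Du f) p) (cross3 (Du f p) (Dv f p)) ^ 2 = Real.sin (ψ p) ^ 4 := by
    have h2 : mcoef f p = dot3 (Dv (Du f) p) (normalVec f p) := rfl
    rw [dot3_normalVec, hnorm] at h2
    have h3 : ((Real.sin (ψ p))⁻¹ * dot3 (Dv (Du f) p) (cross3 (Du f p) (Dv f p))) ^ 2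
        = Real.sin (ψ p) ^ 2 := by rw [← h2]; exact hm2
    rw [mul_pow] at h3
    have h4 : dot3 (Dv (Du f) p) (cross3 (Du f p) (Dv f p)) ^ 2
        = Real.sin (ψ p) ^ 2 * Real.sin (ψ p) ^ 2 := by
      calc dot3 (Dv (Du f) p) (cross3 (Du f p) (Dv f p)) ^ 2
          = (Real.sin (ψ p) * (Real.sin (ψ p))⁻¹) ^ 2
            * dot3 (Dv (Du f) p) (cross3 (Du f p) (Dv f p)) ^ 2 := by
            rw [mul_inv_cancel₀ hsne]; ring
        _ = Real.sin (ψ p) ^ 2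
            * ((Real.sin (ψ p))⁻¹ ^ 2 * dot3 (Dv (Du f) p) (cross3 (Du f p) (Dv f p)) ^ 2) := by
            ring
        _ = Real.sin (ψ p) ^ 2 * Real.sin (ψ p) ^ 2 := by rw [h3]
    linear_combination h4
  -- |f_uv|² = sin²ψ
  have hww : dot3 (Dv (Du f) p) (Dv (Du f) p) = Real.sin (ψ p) ^ 2 := by
    have h := decomp3 (Dv (Du f) p) (Dv (Du f) p) (Du f p) (Dv f p)
    rw [hcc, hEuv p hp, hGvu p hp] at h
    have h2 : Real.sin (ψ p) ^ 2 * dot3 (Dv (Du f) p) (Dv (Du f) p)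
        = Real.sin (ψ p) ^ 2 * Real.sin (ψ p) ^ 2 := by
      have h3 : Real.sin (ψ p) ^ 2 * dot3 (Dv (Du f) p) (Dv (Du f) p)
          = dot3 (Dv (Du f) p) (cross3 (Du f p) (Dv f p)) ^ 2 := by linear_combination h
      rw [h3, hwc]; ring
    exact mul_left_cancel₀ hs2ne h2
  -- f_uu · f_vv
  have hab : Real.sin (ψ p) ^ 2 * dot3 (Du (Du f) p) (Dv (Dv f) p)
      = -(Real.cos (ψ p) * (-Real.sin (ψ p) * fderiv ℝ ψ p ((1:ℝ),(0:ℝ)))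
          * (-Real.sin (ψ p) * fderiv ℝ ψ p ((0:ℝ),(1:ℝ)))) := by
    have h := decomp3 (Du (Du f) p) (Dv (Dv f) p) (Du f p) (Dv f p)
    rw [hcc, hEuu p hp, hGvv p hp, hE1, hG1, hFco, hl, hn, hFup] at h
    rw [dot3_comm (Dv (Dv f) p) (Du f p), hFvp] at h
    rw [h]; ring
  -- second derivative of F, analytic side
  have hsecψ : dv1 (du1 (Fcoef f)) p
      = -(Real.cos (ψ p) * fderiv ℝ ψ p ((0:ℝ),(1:ℝ))) * fderiv ℝ ψ p ((1:ℝ),(0:ℝ))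
        + (-Real.sin (ψ p)) * dv1 (du1 ψ) p := by
    have he : ∀ q ∈ U, du1 (Fcoef f) q
        = (fun r => -Real.sin (ψ r)) q * (fun r => fderiv ℝ ψ r ((1:ℝ),(0:ℝ))) q := by
      intro q hq
      show fderiv ℝ (Fcoef f) q ((1:ℝ),(0:ℝ)) = _
      rw [hFψ q hq, fderiv_cos_comp (hψd q hq)]
    have h0 : fderiv ℝ (du1 (Fcoef f)) p
        = fderiv ℝ (fun q => (fun r => -Real.sin (ψ r)) q
            * (fun r => fderiv ℝ ψ r ((1:ℝ),(0:ℝ))) q) p := fderiv_congr_on hU he hp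
    have hbd : DifferentiableAt ℝ (fun r => fderiv ℝ ψ r ((1:ℝ),(0:ℝ))) p :=
      diffAt hU (contDiffOn_dirDeriv hU hψ ((1:ℝ),(0:ℝ))) hp
    show fderiv ℝ (du1 (Fcoef f)) p ((0:ℝ),(1:ℝ)) = _
    rw [h0, fderiv_mul_apply (diffAt_neg_sin_comp (hψd p hp)) hbd,
      fderiv_neg_sin_comp (hψd p hp)]
    have hr : fderiv ℝ (fun r => fderiv ℝ ψ r ((1:ℝ),(0:ℝ))) p ((0:ℝ),(1:ℝ))
        = dv1 (du1 ψ) p := rfl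
    rw [hr]
  -- put everything together
  have hfinal : dv1 (du1 (Fcoef f)) p
      = -(Real.sin (ψ p) ^ 2) + dot3 (Du (Du f) p) (Dv (Dv f) p) := by
    rw [hsecond, ht1, hww]
  have hdab : dot3 (Du (Du f) p) (Dv (Dv f) p)
      = -(Real.cos (ψ p) * fderiv ℝ ψ p ((1:ℝ),(0:ℝ)) * fderiv ℝ ψ p ((0:ℝ),(1:ℝ))) := by
    have h2 : Real.sin (ψ p) ^ 2 * dot3 (Du (Du f) p) (Dv (Dv f) p)
        = Real.sin (ψ p) ^ 2 * (-(Real.cos (ψ p) * fderiv ℝ ψ p ((1:ℝ),(0:ℝ))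
            * fderiv ℝ ψ p ((0:ℝ),(1:ℝ)))) := by linear_combination hab
    exact mul_left_cancel₀ hs2ne h2
  have hX : Real.sin (ψ p) * dv1 (du1 ψ) p = Real.sin (ψ p) * Real.sin (ψ p) := by
    linear_combination hsecψ - hfinal - hdab
  exact mul_left_cancel₀ hsne hX
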